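/- The equivalent bilinear form statement: for the bijection σ on F_2^m defined in context, for any nonzero i ∈ F_2^m and any j₁, j₂ with j₁ + j₂ = i, the inner products satisfy ⟨σ(i), j₁⟩ + ⟨σ(i), j₂⟩ = 1 in F_2, i.e., ⟨σ(i), i⟩ = 1 for all nonzero i. -/

import Mathlib

/-- `σ` as in the construction. -/
def sigmaPerm {m : ℕ} (ω : Fin m → ZMod 2) : Fin m → ZMod 2 :=
  if h : ω = 0 then 0
  else
    let k := (Finset.univ.filter fun s => ω s ≠ 0).max' (by
      obtain ⟨s, hs⟩ : ∃ s, ω s ≠ 0 := by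
        by_contra hc; push_neg at hc; exact h (funext fun s => hc s)
      exact ⟨s, Finset.mem_filter.mpr ⟨Finset.mem_univ s, hs⟩⟩)
    fun s => if s < k then 1 - ω s else if s = k then 1 else 0

/-- The standard bilinear form `⟨ω,ν⟩ = Σ_s ω_s ν_s` on `F_2^m`. -/
def bilin {m : ℕ} (ω ν : Fin m → ZMod 2) : ZMod 2 := ∑ s, ω s * ν s

/-! Over `F_2`, `σ(ω)` agrees with `1 - ω` strictly below the top index `k` of `ω`, where
`(1 - x) x = 0`, and vanishes above it, where `ω` does; so `⟨σ(ω), ω⟩` only sees the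
coordinate `k`, on which both vectors are `1`. -/

namespace ZMod

lemma eq_one_of_ne_zero_two {x : ZMod 2} (hx : x ≠ 0) : x = 1 := by
  revert x; decide

lemma one_sub_mul_self_two (x : ZMod 2) : (1 - x) * x = 0 := by
  revert x; decide

end ZMod

section

variable {m : ℕ}

lemma bilin_add_right (ω ν₁ ν₂ : Fin m → ZMod 2) :
    bilin ω (ν₁ + ν₂) = bilin ω ν₁ + bilin ω ν₂ := by
  simp only [bilin, Pi.add_apply, mul_add, Finset.sum_add_distrib]

lemma exists_top_index_sigmaPerm {ω : Fin m → ZMod 2} (hω : ω ≠ 0) :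
    ∃ k, ω k = 1 ∧ (∀ s, k < s → ω s = 0) ∧
      sigmaPerm ω = fun s => if s < k then 1 - ω s else if s = k then 1 else 0 := by
  rw [sigmaPerm, dif_neg hω]
  set S := Finset.univ.filter fun s => ω s ≠ 0
  have hS : S.Nonempty := by
    obtain ⟨s, hs⟩ := Function.ne_iff.mp hω
    exact ⟨s, Finset.mem_filter.mpr ⟨Finset.mem_univ s, hs⟩⟩
  refine ⟨S.max' hS, ZMod.eq_one_of_ne_zero_two (Finset.mem_filter.mp (S.max'_mem hS)).2,
    fun s hs => ?_, rfl⟩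
  by_contra hne
  exact (S.le_max' s (Finset.mem_filter.mpr ⟨Finset.mem_univ s, hne⟩)).not_gt hs

lemma bilin_sigmaPerm_self {ω : Fin m → ZMod 2} (hω : ω ≠ 0) :
    bilin (sigmaPerm ω) ω = 1 := by
  obtain ⟨k, hk, hzero, hσ⟩ := exists_top_index_sigmaPerm hω
  have hterm : ∀ s, sigmaPerm ω s * ω s = if k = s then 1 else 0 := by
    intro s
    rw [hσ]
    rcases lt_trichotomy s k with hlt | rfl | hgt
    · simp only [hlt, if_true, hlt.ne', if_false, ZMod.one_sub_mul_self_two]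
    · simp [hk]
    · simp [hgt.not_gt, hgt.ne, hgt.ne', hzero s hgt]
  simp only [bilin, hterm, Finset.sum_ite_eq, Finset.mem_univ, if_true]

end

theorem bilin_sigma_eq_one (m : ℕ) (i : Fin m → ZMod 2) (hi : i ≠ 0) :
    (∀ j₁ j₂ : Fin m → ZMod 2, j₁ + j₂ = i →
      bilin (sigmaPerm i) j₁ + bilin (sigmaPerm i) j₂ = 1) ∧
    bilin (sigmaPerm i) i = 1 :=
  ⟨fun j₁ j₂ hj => by rw [← bilin_add_right, hj, bilin_sigmaPerm_self hi],
    bilin_sigmaPerm_self hi⟩
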